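/- Let A be a σ-set and M, N ∈ 3^A with M ∗∩ N = ∅, and set R = M ⊕ N⁻ (with N⁻ = star '' N). Then both S₁ = N ⊕ R⁻ and S₂ = R⁻ satisfy the fusionable equation S ⊕ M = N. -/
import Mathlib


variable {α : Type*} [DecidableEq α]

/-- The *-intersection: `A ∗∩ B = {x ∈ A : star x ∈ B}`. -/
def sInter (star : α → α) (A B : Finset α) : Finset α :=
  A.filter (fun x => star x ∈ B)

/-- The *-difference: `A ∗ B = A \ (A ∗∩ B)`. -/
def sDiff (star : α → α) (A B : Finset α) : Finset α :=
  A \ sInter star A B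

/-- The fusion: `A ⊕ B = (A ∗ B) ∪ (B ∗ A)`. -/
def fusion (star : α → α) (A B : Finset α) : Finset α :=
  sDiff star A B ∪ sDiff star B A

/-- A σ-set: never contains an element together with its anti-element. -/
def IsSigmaSet (star : α → α) (A : Finset α) : Prop :=
  ∀ x ∈ A, star x ∉ A

/-- The generated space `⟨2^A, 2^B⟩ = {X ⊕ Y : X ⊆ A, Y ⊆ B}`. -/
def genSpace (star : α → α) (A B : Finset α) : Finset (Finset α) :=
  (A.powerset ×ˢ B.powerset).image (fun p => fusion star p.1 p.2)


lemma mem_fusion (star : α → α) (A B : Finset α) (x : α) :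
    x ∈ fusion star A B ↔ (x ∈ A ∧ star x ∉ B) ∨ (x ∈ B ∧ star x ∉ A) := by
  simp [fusion, sDiff, sInter, Finset.mem_union, Finset.mem_sdiff, Finset.mem_filter]
  tauto

lemma mem_image_star {star : α → α} (hinv : Function.Involutive star)
    (S : Finset α) (x : α) : x ∈ S.image star ↔ star x ∈ S := by
  constructor
  · rintro h
    rcases Finset.mem_image.mp h with ⟨a, ha, rfl⟩
    rwa [hinv]
  · intro h
    exact Finset.mem_image.mpr ⟨star x, h, hinv x⟩

lemma sigma_of_mem_genSpace {star : α → α} (hinv : Function.Involutive star)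
    {A S : Finset α} (hA : IsSigmaSet star A)
    (hS : S ∈ genSpace star A (A.image star)) : IsSigmaSet star S := by
  rcases Finset.mem_image.mp hS with ⟨⟨X, Y⟩, hXY, rfl⟩
  rcases Finset.mem_product.mp hXY with ⟨hX, hY⟩
  have hX' := Finset.mem_powerset.mp hX
  have hY' := Finset.mem_powerset.mp hY
  intro x hx hsx
  rw [mem_fusion] at hx hsx
  rw [hinv x] at hsx
  have hXA : ∀ y, y ∈ X → y ∈ A := fun y hy => hX' hy
  have hYA : ∀ y, y ∈ Y → star y ∈ A := by
    intro y hy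
    rcases Finset.mem_image.mp (hY' hy) with ⟨a, ha, rfl⟩
    rwa [hinv]
  rcases hx with ⟨hx1, hx2⟩ | ⟨hx1, hx2⟩ <;> rcases hsx with ⟨h1, h2⟩ | ⟨h1, h2⟩
  · exact hA x (hXA x hx1) (hXA _ h1)
  · exact h2 hx1
  · exact hx2 h1
  · have hxA : x ∈ A := by have := hYA (star x) h1; rwa [hinv] at this
    exact hA x hxA (hYA x hx1)

set_option maxHeartbeats 1000000 in
theorem stmt_17 (star : α → α) (hinv : Function.Involutive star)
    (hne : ∀ x, star x ≠ x) (A : Finset α) (hA : IsSigmaSet star A)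
    (M N : Finset α) (hM : M ∈ genSpace star A (A.image star))
    (hN : N ∈ genSpace star A (A.image star))
    (hfus : sInter star M N = ∅)
    (R : Finset α) (hR : R = fusion star M (N.image star)) :
    fusion star (fusion star N (R.image star)) M = N ∧
      fusion star (R.image star) M = N := by
  have hMs : IsSigmaSet star M := sigma_of_mem_genSpace hinv hA hM
  have hNs : IsSigmaSet star N := sigma_of_mem_genSpace hinv hA hN
  have hfus' : ∀ x, ¬(x ∈ M ∧ star x ∈ N) := by
    intro x hx
    have : x ∈ sInter star M N := Finset.mem_filter.mpr hx
    simp [hfus] at this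
  have key : ∀ x, (x ∈ M → star x ∉ M) ∧ (x ∈ N → star x ∉ N) ∧
      (x ∈ M → star x ∉ N) ∧ (star x ∈ M → x ∉ N) := by
    intro x
    refine ⟨hMs x, hNs x, fun h1 h2 => hfus' x ⟨h1, h2⟩, fun h1 h2 => ?_⟩
    exact hfus' (star x) ⟨h1, by rwa [hinv]⟩
  have hRx : ∀ y, (y ∈ R.image star ↔ ((star y ∈ M ∧ star y ∉ N) ∨ (y ∈ N ∧ y ∉ M))) := by
    intro y
    simp [hR, mem_image_star hinv, mem_fusion, hinv y]
  constructor <;>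
  · ext x
    have h1 := key x
    have h2 := key (star x)
    rw [hinv x] at h2
    simp only [mem_fusion, hRx, hinv x]
    by_cases hm : x ∈ M <;> by_cases hm2 : star x ∈ M <;>
      by_cases hn : x ∈ N <;> by_cases hn2 : star x ∈ N <;> simp_all
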